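/- Suppose Assumptions (A1) and (A2) hold for cost functions E_1,…,E_M, and let α > 0 and N, M, d be positive integers. Define F_N^m : ℝ^{M·N·d} → ℝ^d by F_N^m(X^1,…,X^M) := Σ_{i=1}^N [e^{−α E_m(X^{m,i}; M^{−m})} / Σ_{j=1}^N e^{−α E_m(X^{m,j}; M^{−m})}] · X^{m,i}, where X^m = (X^{m,1},…,X^{m,N}) with each X^{m,i} ∈ ℝ^d, and M^{−m} := (1/N) Σ_{i=1}^N (X^{1,i},…,X^{m−1,i},X^{m+1,i},…,X^{M,i}). Then for every R > 0 there exists C > 0 (depending on R and N) such that |F_N^m(X_0) − F_N^m(X_1)| ≤ C |X_0 − X_1| for all X_0, X_1 ∈ ℝ^{M·N·d} with max(|X_0|, |X_1|) ≤ R. -/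

import Mathlib

/-!
`F_N^m(X)` is the mean of the points `X^{m,i}` under the softmax weights of the log-weights
`u_i = -α E_m(X^{m,i}; M^{-m})`. On the ball of radius `R`, (A1) makes every `u_i` Lipschitz in
`X`, with some constant `L`. If all log-weights move by at most `δ`, each softmax weight changes
by a factor in `[e^{-2δ}, e^{2δ}]`, so the weights move by at most `e^{2δ} - 1 ≤ 2δ e^{2δ}` in
total; splitting `F(X₀) - F(X₁)` into the change of the weights and the change of the points,
with `δ = L ‖X₀ - X₁‖ ≤ 2LR`, gives the Lipschitz bound.
-/

open MeasureTheory Finset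
open scoped ENNReal NNReal

noncomputable section

/-- `ℝ^d` with the Euclidean norm. -/
abbrev Vec (d : ℕ) := EuclideanSpace ℝ (Fin d)

/-- `ℝ^{M·d}`, the space of opponents' strategies, with the Euclidean norm. -/
abbrev Opp (M d : ℕ) := EuclideanSpace ℝ (Fin M × Fin d)

/-- Euclidean norm of the concatenated vector `(x, y) ∈ ℝ^d × ℝ^{M·d}`. -/
def pairNorm {d M : ℕ} (x : Vec d) (y : Opp M d) : ℝ :=
  Real.sqrt (‖x‖ ^ 2 + ‖y‖ ^ 2)

/-- Given strategies `Z^1, …, Z^{M+1}`, the vector `Z^{-m}` of all strategies except the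
`m`-th one. -/
def oppOf {M d : ℕ} (m : Fin (M + 1)) (Z : Fin (M + 1) → Vec d) : Opp M d :=
  WithLp.toLp 2 fun p : Fin M × Fin d => Z (m.succAbove p.1) p.2

/-- The consensus point `X_α(ρ, Y) = (∫ x e^{-α E(x;Y)} dρ)/(∫ e^{-α E(x;Y)} dρ)`. -/
def consensus {d M : ℕ} (α : ℝ) (Em : Vec d → Opp M d → ℝ)
    (ρ : Measure (Vec d)) (Y : Opp M d) : Vec d :=
  (∫ x, Real.exp (-α * Em x Y) ∂ρ)⁻¹ • ∫ x, Real.exp (-α * Em x Y) • x ∂ρ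

/-- The mean `E[μ] = ∫ x dμ(x)` of a measure on `ℝ^d`. -/
def meanOf {d : ℕ} (μ : Measure (Vec d)) : Vec d := ∫ x, x ∂μ

/-- The empirical measure `(1/N) ∑_{i} δ_{X_i}`. -/
def empMeas {d N : ℕ} (X : Fin N → Vec d) : Measure (Vec d) :=
  (N : ℝ≥0∞)⁻¹ • ∑ i, Measure.dirac (X i)

/-- The `p`-Wasserstein distance, as an infimum over couplings. -/
def Wdist {d : ℕ} (p : ℝ) (μ ν : Measure (Vec d)) : ℝ :=
  (sInf { e : ℝ≥0∞ | ∃ π : Measure (Vec d × Vec d), IsProbabilityMeasure π ∧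
      π.map Prod.fst = μ ∧ π.map Prod.snd = ν ∧
      e = (∫⁻ z, (‖z.1 - z.2‖₊ : ℝ≥0∞) ^ p ∂π) ^ (1 / p) }).toReal

/-- Euclidean norm of a configuration `X = (X^{m,i}) ∈ ℝ^{(M+1)·N·d}`. -/
def confNorm {d M N : ℕ} (X : Fin (M + 1) → Fin N → Vec d) : ℝ :=
  Real.sqrt (∑ m, ∑ i, ‖X m i‖ ^ 2)

/-- The weighted-mean map `F_N^m(X) = ∑_i (ω_i / ∑_j ω_j) • X^{m,i}` with
`ω_i = e^{-α E_m(X^{m,i}; M^{-m})}`, where `M^{-m}` is the average over `i` of the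
opponents' strategies. -/
def FNmap {d M N : ℕ} (α : ℝ) (E : Fin (M + 1) → Vec d → Opp M d → ℝ)
    (m : Fin (M + 1)) (X : Fin (M + 1) → Fin N → Vec d) : Vec d :=
  let Mneg : Opp M d := oppOf m fun l => (N : ℝ)⁻¹ • ∑ i, X l i
  ∑ i, (Real.exp (-α * E m (X m i) Mneg) / ∑ j, Real.exp (-α * E m (X m j) Mneg)) • X m i

def softmax {ι : Type*} [Fintype ι] (u : ι → ℝ) (i : ι) : ℝ :=
  Real.exp (u i) / ∑ j, Real.exp (u j)

section Softmax

variable {ι : Type*} [Fintype ι]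

lemma softmax_nonneg (u : ι → ℝ) (i : ι) : 0 ≤ softmax u i := by
  unfold softmax; positivity

lemma sum_softmax_le_one (u : ι → ℝ) : ∑ i, softmax u i ≤ 1 := by
  simp only [softmax, ← Finset.sum_div]
  exact div_self_le_one _

lemma softmax_le_exp_mul_softmax {u v : ι → ℝ} {δ : ℝ} (h : ∀ j, |u j - v j| ≤ δ) (i : ι) :
    softmax u i ≤ Real.exp (2 * δ) * softmax v i := by
  have hu : ∀ j, Real.exp (u j) ≤ Real.exp δ * Real.exp (v j) := fun j => by
    rw [← Real.exp_add]; exact Real.exp_le_exp.mpr (by linarith [(abs_le.mp (h j)).2])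
  have hv : ∀ j, Real.exp (v j) ≤ Real.exp δ * Real.exp (u j) := fun j => by
    rw [← Real.exp_add]; exact Real.exp_le_exp.mpr (by linarith [(abs_le.mp (h j)).1])
  have hne : (Finset.univ : Finset ι).Nonempty := ⟨i, Finset.mem_univ i⟩
  have hSu : 0 < ∑ j, Real.exp (u j) := Finset.sum_pos (fun j _ => Real.exp_pos _) hne
  have hSv : 0 < ∑ j, Real.exp (v j) := Finset.sum_pos (fun j _ => Real.exp_pos _) hne
  have hS : ∑ j, Real.exp (v j) ≤ Real.exp δ * ∑ j, Real.exp (u j) := by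
    rw [Finset.mul_sum]; exact Finset.sum_le_sum fun j _ => hv j
  rw [softmax, softmax, mul_div_assoc', div_le_div_iff₀ hSu hSv, two_mul, Real.exp_add]
  calc Real.exp (u i) * ∑ j, Real.exp (v j)
      ≤ (Real.exp δ * Real.exp (v i)) * (Real.exp δ * ∑ j, Real.exp (u j)) :=
        mul_le_mul (hu i) hS hSv.le (by positivity)
    _ = Real.exp δ * Real.exp δ * Real.exp (v i) * ∑ j, Real.exp (u j) := by ring

lemma abs_softmax_sub_softmax_le {u v : ι → ℝ} {δ : ℝ} (h : ∀ j, |u j - v j| ≤ δ) (i : ι) :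
    |softmax u i - softmax v i| ≤ (Real.exp (2 * δ) - 1) * softmax v i := by
  have h' : ∀ j, |v j - u j| ≤ δ := fun j => abs_sub_comm (u j) (v j) ▸ h j
  have hup := softmax_le_exp_mul_softmax h i
  have hlo := softmax_le_exp_mul_softmax h' i
  have hv := softmax_nonneg v i
  have hE := Real.exp_pos (2 * δ)
  rw [abs_sub_le_iff]
  constructor
  · linarith
  · -- `softmax u i ≥ e^{-2δ} softmax v i ≥ (2 - e^{2δ}) softmax v i`
    nlinarith [mul_nonneg (sq_nonneg (Real.exp (2 * δ) - 1)) hv]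

end Softmax

lemma norm_sum_smul_sub_sum_smul_le {ι V : Type*} [Fintype ι] [SeminormedAddCommGroup V]
    [NormedSpace ℝ V] {p q : ι → ℝ} {x y : ι → V} {ε R D : ℝ} (hq : ∀ i, 0 ≤ q i)
    (hpq : ∀ i, |p i - q i| ≤ ε * q i) (hx : ∀ i, ‖x i‖ ≤ R) (hxy : ∀ i, ‖x i - y i‖ ≤ D) :
    ‖∑ i, p i • x i - ∑ i, q i • y i‖ ≤ (ε * R + D) * ∑ i, q i := by
  have hsplit : ∑ i, p i • x i - ∑ i, q i • y i = ∑ i, ((p i - q i) • x i + q i • (x i - y i)) := by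
    rw [← Finset.sum_sub_distrib]
    refine Finset.sum_congr rfl fun i _ => ?_
    rw [sub_smul, smul_sub]; abel
  rw [hsplit, Finset.mul_sum]
  refine (norm_sum_le _ _).trans (Finset.sum_le_sum fun i _ => ?_)
  calc ‖(p i - q i) • x i + q i • (x i - y i)‖
      ≤ |p i - q i| * ‖x i‖ + q i * ‖x i - y i‖ := by
        refine (norm_add_le _ _).trans ?_
        rw [norm_smul, norm_smul, Real.norm_eq_abs, Real.norm_eq_abs, abs_of_nonneg (hq i)]
    _ ≤ ε * q i * R + q i * D :=
        add_le_add (mul_le_mul (hpq i) (hx i) (norm_nonneg _) ((abs_nonneg _).trans (hpq i)))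
          (mul_le_mul_of_nonneg_left (hxy i) (hq i))
    _ = (ε * R + D) * q i := by ring

lemma exp_sub_one_le_mul_exp {t : ℝ} : Real.exp t - 1 ≤ t * Real.exp t := by
  have h := Real.one_sub_le_exp_neg t
  have h1 : Real.exp (-t) * Real.exp t = 1 := by rw [← Real.exp_add, neg_add_cancel, Real.exp_zero]
  nlinarith [Real.exp_pos t]

lemma pairNorm_nonneg {d M : ℕ} (x : Vec d) (y : Opp M d) : 0 ≤ pairNorm x y :=
  Real.sqrt_nonneg _

lemma pairNorm_le_add {d M : ℕ} (x : Vec d) (y : Opp M d) : pairNorm x y ≤ ‖x‖ + ‖y‖ :=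
  Real.sqrt_le_iff.mpr ⟨by positivity, by nlinarith [norm_nonneg x, norm_nonneg y]⟩

lemma norm_inv_natCast_smul_sum_le {ι V : Type*} [Fintype ι] [SeminormedAddCommGroup V]
    [NormedSpace ℝ V] (x : PiLp 2 fun _ : ι => V) :
    ‖(Fintype.card ι : ℝ)⁻¹ • ∑ i, x i‖ ≤ ‖x‖ := by
  rw [norm_smul, norm_inv, Real.norm_natCast]
  calc (Fintype.card ι : ℝ)⁻¹ * ‖∑ i, x i‖ ≤ (Fintype.card ι : ℝ)⁻¹ * ∑ _i : ι, ‖x‖ :=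
        mul_le_mul_of_nonneg_left ((norm_sum_le _ _).trans
          (Finset.sum_le_sum fun i _ => PiLp.norm_apply_le x i)) (by positivity)
    _ ≤ ‖x‖ := by
        rw [Finset.sum_const, Finset.card_univ, nsmul_eq_mul, ← mul_assoc]
        exact mul_le_of_le_one_left (norm_nonneg x) (inv_mul_le_one_of_le₀ le_rfl (by positivity))

section Configuration

variable {d M N : ℕ}

/-- Nested `L²` products, so that `confNorm` is a genuine norm. -/
abbrev confLp (X : Fin (M + 1) → Fin N → Vec d) :
    PiLp 2 fun _ : Fin (M + 1) => PiLp 2 fun _ : Fin N => Vec d :=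
  WithLp.toLp 2 fun l => WithLp.toLp 2 (X l)

lemma confNorm_eq_norm (X : Fin (M + 1) → Fin N → Vec d) : confNorm X = ‖confLp X‖ := by
  rw [confNorm, PiLp.norm_eq_of_L2]
  congr 1
  exact Finset.sum_congr rfl fun l _ => by rw [PiLp.norm_sq_eq_of_L2]

lemma norm_le_confNorm (X : Fin (M + 1) → Fin N → Vec d) (l : Fin (M + 1)) (i : Fin N) :
    ‖X l i‖ ≤ confNorm X := by
  rw [confNorm_eq_norm]
  exact (PiLp.norm_apply_le (WithLp.toLp 2 (X l)) i).trans (PiLp.norm_apply_le (confLp X) l)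

lemma confNorm_sub_le (X₀ X₁ : Fin (M + 1) → Fin N → Vec d) :
    confNorm (X₀ - X₁) ≤ confNorm X₀ + confNorm X₁ := by
  simp only [confNorm_eq_norm]
  exact norm_sub_le (confLp X₀) (confLp X₁)

lemma norm_oppOf_le (m : Fin (M + 1)) (Z : Fin (M + 1) → Vec d) :
    ‖oppOf m Z‖ ≤ ‖(WithLp.toLp 2 Z : PiLp 2 fun _ : Fin (M + 1) => Vec d)‖ := by
  refine (sq_le_sq₀ (norm_nonneg _) (norm_nonneg _)).mp ?_
  rw [EuclideanSpace.norm_sq_eq, PiLp.norm_sq_eq_of_L2, Fintype.sum_prod_type,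
    Fin.sum_univ_succAbove _ m]
  refine le_add_of_nonneg_of_le (sq_nonneg _) (Finset.sum_le_sum fun l _ => ?_)
  rw [PiLp.toLp_apply, EuclideanSpace.norm_sq_eq]
  rfl

/-- The paper's `M^{-m}`. -/
def oppMean (m : Fin (M + 1)) (X : Fin (M + 1) → Fin N → Vec d) : Opp M d :=
  oppOf m fun l => (N : ℝ)⁻¹ • ∑ i, X l i

lemma norm_oppMean_le (m : Fin (M + 1)) (X : Fin (M + 1) → Fin N → Vec d) :
    ‖oppMean m X‖ ≤ confNorm X := by
  refine (norm_oppOf_le m _).trans ?_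
  rw [confNorm_eq_norm]
  refine (sq_le_sq₀ (norm_nonneg _) (norm_nonneg _)).mp ?_
  rw [PiLp.norm_sq_eq_of_L2, PiLp.norm_sq_eq_of_L2]
  refine Finset.sum_le_sum fun l _ => pow_le_pow_left₀ (norm_nonneg _) ?_ 2
  simpa using norm_inv_natCast_smul_sum_le (WithLp.toLp 2 (X l))

lemma oppMean_sub (m : Fin (M + 1)) (X₀ X₁ : Fin (M + 1) → Fin N → Vec d) :
    oppMean m X₀ - oppMean m X₁ = oppMean m (X₀ - X₁) := by
  ext p
  simp [oppMean, oppOf, Finset.sum_sub_distrib, smul_sub]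

lemma pairNorm_le_two_mul_confNorm (m : Fin (M + 1)) (X : Fin (M + 1) → Fin N → Vec d)
    (i : Fin N) : pairNorm (X m i) (oppMean m X) ≤ 2 * confNorm X := by
  linarith [pairNorm_le_add (X m i) (oppMean m X), norm_le_confNorm X m i, norm_oppMean_le m X]

end Configuration

lemma abs_energy_sub_le {d M N : ℕ} {Em : Vec d → Opp M d → ℝ} {C₁ s R : ℝ} (hC₁ : 0 ≤ C₁)
    (hs : 0 ≤ s)
    (hA1 : ∀ (x₀ x₁ : Vec d) (y₀ y₁ : Opp M d), |Em x₀ y₀ - Em x₁ y₁| ≤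
      C₁ * (1 + pairNorm x₀ y₀ + pairNorm x₁ y₁) ^ s * pairNorm (x₀ - x₁) (y₀ - y₁))
    {m : Fin (M + 1)} {X₀ X₁ : Fin (M + 1) → Fin N → Vec d} (hX₀ : confNorm X₀ ≤ R)
    (hX₁ : confNorm X₁ ≤ R) (i : Fin N) :
    |Em (X₀ m i) (oppMean m X₀) - Em (X₁ m i) (oppMean m X₁)| ≤
      2 * C₁ * (1 + 4 * R) ^ s * confNorm (X₀ - X₁) := by
  have hR : 0 ≤ R := (Real.sqrt_nonneg _).trans hX₀
  have h₀ := pairNorm_le_two_mul_confNorm m X₀ i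
  have h₁ := pairNorm_le_two_mul_confNorm m X₁ i
  have hΔ : pairNorm (X₀ m i - X₁ m i) (oppMean m X₀ - oppMean m X₁) ≤
      2 * confNorm (X₀ - X₁) := by
    rw [oppMean_sub]; exact pairNorm_le_two_mul_confNorm m (X₀ - X₁) i
  have hbase : 0 ≤ 1 + pairNorm (X₀ m i) (oppMean m X₀) + pairNorm (X₁ m i) (oppMean m X₁) :=
    by linarith [pairNorm_nonneg (X₀ m i) (oppMean m X₀), pairNorm_nonneg (X₁ m i) (oppMean m X₁)]
  have hpow : (1 + pairNorm (X₀ m i) (oppMean m X₀) + pairNorm (X₁ m i) (oppMean m X₁)) ^ s ≤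
      (1 + 4 * R) ^ s := Real.rpow_le_rpow hbase (by linarith) hs
  calc _ ≤ _ := hA1 _ _ _ _
    _ ≤ C₁ * (1 + 4 * R) ^ s * (2 * confNorm (X₀ - X₁)) := by
        gcongr; exact pairNorm_nonneg _ _
    _ = 2 * C₁ * (1 + 4 * R) ^ s * confNorm (X₀ - X₁) := by ring

lemma FNmap_eq_sum_softmax {d M N : ℕ} (α : ℝ) (E : Fin (M + 1) → Vec d → Opp M d → ℝ)
    (m : Fin (M + 1)) (X : Fin (M + 1) → Fin N → Vec d) :
    FNmap α E m X = ∑ i, softmax (fun j => -α * E m (X m j) (oppMean m X)) i • X m i :=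
  rfl

theorem stmt5_general {d N M : ℕ}
    (α : ℝ)
    (E : Fin (M + 1) → Vec d → Opp M d → ℝ)
    -- Assumption (A1)
    (C₁ s : ℝ) (hC₁ : 0 < C₁) (hs : 0 ≤ s)
    (hA1 : ∀ (m : Fin (M + 1)) (x₀ x₁ : Vec d) (y₀ y₁ : Opp M d),
      |E m x₀ y₀ - E m x₁ y₁| ≤
        C₁ * (1 + pairNorm x₀ y₀ + pairNorm x₁ y₁) ^ s * pairNorm (x₀ - x₁) (y₀ - y₁)) :
    ∀ R > (0 : ℝ), ∃ C > (0 : ℝ), ∀ (X₀ X₁ : Fin (M + 1) → Fin N → Vec d),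
      max (confNorm X₀) (confNorm X₁) ≤ R →
      ∀ m : Fin (M + 1),
        ‖FNmap α E m X₀ - FNmap α E m X₁‖ ≤ C * confNorm (X₀ - X₁) := by
  intro R hR
  set L := |α| * (2 * C₁ * (1 + 4 * R) ^ s)
  have hL : 0 ≤ L := by positivity
  refine ⟨2 * L * R * Real.exp (4 * L * R) + 1, by positivity, fun X₀ X₁ hX m => ?_⟩
  obtain ⟨hX₀, hX₁⟩ := max_le_iff.mp hX
  set D := confNorm (X₀ - X₁)
  have hD0 : 0 ≤ D := Real.sqrt_nonneg _
  have hD : D ≤ 2 * R := (confNorm_sub_le X₀ X₁).trans (by linarith)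
  have hu : ∀ i, |-α * E m (X₀ m i) (oppMean m X₀) - -α * E m (X₁ m i) (oppMean m X₁)| ≤
      L * D := fun i => by
    rw [← mul_sub, abs_mul, abs_neg, mul_assoc]
    exact mul_le_mul_of_nonneg_left (abs_energy_sub_le hC₁.le hs (hA1 m) hX₀ hX₁ i) (abs_nonneg α)
  have hF := norm_sum_smul_sub_sum_smul_le (softmax_nonneg _) (abs_softmax_sub_softmax_le hu)
    (fun i => (norm_le_confNorm X₀ m i).trans hX₀) (fun i => norm_le_confNorm (X₀ - X₁) m i)
  have hexp : Real.exp (2 * (L * D)) ≤ Real.exp (4 * L * R) := Real.exp_le_exp.mpr (by nlinarith)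
  have hexp1 : 0 ≤ Real.exp (2 * (L * D)) - 1 := sub_nonneg.mpr (Real.one_le_exp (by positivity))
  rw [FNmap_eq_sum_softmax, FNmap_eq_sum_softmax]
  calc _ ≤ ((Real.exp (2 * (L * D)) - 1) * R + D) * _ := hF
    _ ≤ (Real.exp (2 * (L * D)) - 1) * R + D :=
        mul_le_of_le_one_right (by positivity) (sum_softmax_le_one _)
    _ ≤ 2 * (L * D) * Real.exp (2 * (L * D)) * R + D := by
        gcongr; exact exp_sub_one_le_mul_exp
    _ ≤ (2 * L * R * Real.exp (4 * L * R) + 1) * D := by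
        nlinarith [mul_le_mul_of_nonneg_left hexp (by positivity : 0 ≤ 2 * L * R * D)]

/-- local Lipschitz property of `F_N^m`. -/
theorem stmt5 {d N M : ℕ} (hd : 0 < d) (hN : 0 < N)
    (α : ℝ) (hα : 0 < α)
    (E : Fin (M + 1) → Vec d → Opp M d → ℝ)
    -- Assumption (A1)
    (C₁ s : ℝ) (hC₁ : 0 < C₁) (hs : 0 ≤ s)
    (hA1 : ∀ (m : Fin (M + 1)) (x₀ x₁ : Vec d) (y₀ y₁ : Opp M d),
      |E m x₀ y₀ - E m x₁ y₁| ≤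
        C₁ * (1 + pairNorm x₀ y₀ + pairNorm x₁ y₁) ^ s * pairNorm (x₀ - x₁) (y₀ - y₁))
    -- Assumption (A2)
    (ℓ c G : ℝ) (hℓ : 0 ≤ ℓ) (hc : 0 < c) (hG : 0 < G)
    (hA2 : ∀ (m : Fin (M + 1)) (x : Vec d) (y : Opp M d),
      (1 / c) * (pairNorm x y ^ ℓ - G) ≤ E m x y ∧ E m x y ≤ c * (pairNorm x y ^ ℓ + G)) :
    ∀ R > (0 : ℝ), ∃ C > (0 : ℝ), ∀ (X₀ X₁ : Fin (M + 1) → Fin N → Vec d),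
      max (confNorm X₀) (confNorm X₁) ≤ R →
      ∀ m : Fin (M + 1),
        ‖FNmap α E m X₀ - FNmap α E m X₁‖ ≤ C * confNorm (X₀ - X₁) :=
  stmt5_general α E C₁ s hC₁ hs hA1
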